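/- For every even r ≥ 4, there exists a simple bipartite planar graph in which one part has 5r vertices all of degree 3 and the other part has 3r vertices all of degree 5. -/

import Mathlib

/-- A topological plane embedding (drawing) of a simple graph: vertices are points
of the plane, edges are injective continuous arcs meeting only at common endpoints. -/
structure PlaneEmb {V : Type} (G : SimpleGraph V) where
  pos : V → ℝ × ℝ
  pos_inj : Function.Injective pos
  arc : ∀ ⦃u v : V⦄, G.Adj u v → unitInterval → ℝ × ℝ
  arc_cont : ∀ ⦃u v : V⦄ (h : G.Adj u v), Continuous (arc h)
  arc_inj : ∀ ⦃u v : V⦄ (h : G.Adj u v), Function.Injective (arc h)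
  arc_zero : ∀ ⦃u v : V⦄ (h : G.Adj u v), arc h 0 = pos u
  arc_one : ∀ ⦃u v : V⦄ (h : G.Adj u v), arc h 1 = pos v
  arc_symm : ∀ ⦃u v : V⦄ (h : G.Adj u v) (t : unitInterval),
    arc h.symm (unitInterval.symm t) = arc h t
  arc_vertex : ∀ ⦃u v : V⦄ (h : G.Adj u v) (t : unitInterval),
    (∃ w, arc h t = pos w) → t = 0 ∨ t = 1
  arc_disj : ∀ ⦃u v x y : V⦄ (h : G.Adj u v) (h' : G.Adj x y),
    s(u, v) ≠ s(x, y) → ∀ t₁ t₂ : unitInterval, arc h t₁ = arc h' t₂ → ∃ w, arc h t₁ = pos w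

/-- The pair `(a^p | b^q)` is planar graphic: there is a simple bipartite planar graph
one of whose parts has `p` vertices, all of degree `a`, and the other part has `q`
vertices, all of degree `b`. -/
def PlanarPair (a p b q : ℕ) : Prop :=
  ∃ (V : Type) (_ : Finite V) (G : SimpleGraph V) (A B : Set V),
    Disjoint A B ∧ A ∪ B = Set.univ ∧ A.ncard = p ∧ B.ncard = q ∧
    (∀ ⦃u v⦄, G.Adj u v → ((u ∈ A ∧ v ∈ B) ∨ (u ∈ B ∧ v ∈ A))) ∧
    (∀ v ∈ A, (G.neighborSet v).ncard = a) ∧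
    (∀ v ∈ B, (G.neighborSet v).ncard = b) ∧
    Nonempty (PlaneEmb G)

/-!
The statement is additive in `r`: two drawings can be placed side by side, so the disjoint union
of witnesses for `r` and `r'` is a witness for `r + r'`. Every even `r ≥ 4` is a sum of 4's and
6's, so it suffices to give witnesses for `r = 4` and `r = 6`. Both are incidence graphs
between faces and vertices of a triangulation of the sphere (all 20 faces of the icosahedron;
30 of the 32 faces of a triangulation with 18 vertices), drawn with straight edges, each face
as an integer point inside it. Such a drawing is plane as soon as no vertex lies on the line
of an edge it does not belong to and, for any two disjoint edges, the ends of one lie strictly on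
the same side of the line of the other; both conditions are sign conditions on orientation
determinants, verified by computation.
-/

open Set Function SimpleGraph AffineMap

section Orient

variable {R : Type*} [CommRing R]

def orient (a b c : R × R) : R := (b.1 - a.1) * (c.2 - a.2) - (b.2 - a.2) * (c.1 - a.1)

theorem orient_swap (a b c : R × R) : orient b a c = -orient a b c := by
  simp only [orient]; ring

theorem orient_lineMap (a b c d : R × R) (t : R) :
    orient a b (lineMap c d t) = (1 - t) * orient a b c + t * orient a b d := by
  simp only [orient, lineMap_apply_module, Prod.fst_add, Prod.snd_add, Prod.smul_fst,
    Prod.smul_snd, smul_eq_mul]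
  ring

theorem orient_self_left (a b : R × R) : orient a b a = 0 := by simp only [orient]; ring

theorem orient_self_right (a b : R × R) : orient a b b = 0 := by simp only [orient]; ring

theorem RingHom.map_orient {S : Type*} [CommRing S] (f : R →+* S) (a b c : R × R) :
    orient (Prod.map f f a) (Prod.map f f b) (Prod.map f f c) = f (orient a b c) := by
  simp only [orient, Prod.map_fst, Prod.map_snd, map_sub, map_mul]

end Orient

theorem orient_eq_zero_of_mem_segment {a b p : ℝ × ℝ} (hp : p ∈ segment ℝ a b) :
    orient a b p = 0 := by
  obtain ⟨t, -, rfl⟩ := (segment_eq_image_lineMap ℝ a b).subset hp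
  rw [orient_lineMap, orient_self_left, orient_self_right]; ring

theorem disjoint_segment_of_orient_mul_pos {a b c d : ℝ × ℝ}
    (h : 0 < orient a b c * orient a b d) : Disjoint (segment ℝ a b) (segment ℝ c d) := by
  refine Set.disjoint_left.mpr fun p hab hcd => ?_
  obtain ⟨t, ⟨ht₀, ht₁⟩, rfl⟩ := (segment_eq_image_lineMap ℝ c d).subset hcd
  have hzero := orient_eq_zero_of_mem_segment hab
  rw [orient_lineMap] at hzero
  have hcomb := sub_add_cancel (1 : ℝ) t
  rcases mul_pos_iff.mp h with ⟨hc, hd⟩ | ⟨hc, hd⟩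
  · exact (convex_Ioi 0 hc hd (sub_nonneg.2 ht₁) ht₀ hcomb).ne' hzero
  · exact (convex_Iio 0 hc hd (sub_nonneg.2 ht₁) ht₀ hcomb).ne hzero

theorem eq_of_mem_segment_of_mem_segment {a b c p : ℝ × ℝ} (h : orient a c b ≠ 0)
    (hb : p ∈ segment ℝ a b) (hc : p ∈ segment ℝ a c) : p = a := by
  obtain ⟨t, -, rfl⟩ := (segment_eq_image_lineMap ℝ a b).subset hb
  have hzero := orient_eq_zero_of_mem_segment hc
  rw [orient_lineMap, orient_self_left, mul_zero, zero_add, mul_eq_zero] at hzero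
  rw [hzero.resolve_right h, lineMap_apply_zero]

noncomputable def expFst (s : ℝ) (z : ℝ × ℝ) : ℝ × ℝ := (s * Real.exp z.1, z.2)

theorem continuous_expFst (s : ℝ) : Continuous (expFst s) := by
  unfold expFst; fun_prop

theorem expFst_injective {s : ℝ} (hs : s ≠ 0) : Injective (expFst s) := fun z w h => by
  simp only [expFst, Prod.mk.injEq, mul_right_inj' hs, Real.exp_eq_exp] at h
  exact Prod.ext h.1 h.2

theorem expFst_one_ne_expFst_neg_one (z w : ℝ × ℝ) : expFst 1 z ≠ expFst (-1) w := fun h => by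
  have := congrArg Prod.fst h
  simp only [expFst] at this
  linarith [Real.exp_pos z.1, Real.exp_pos w.1]

namespace PlaneEmb

variable {V W : Type} {G : SimpleGraph V} {H : SimpleGraph W}

def ofSegments (pos : V → ℝ × ℝ) (hinj : Injective pos)
    (hvert : ∀ ⦃u v⦄, G.Adj u v → ∀ w, pos w ∈ segment ℝ (pos u) (pos v) → w = u ∨ w = v)
    (hinter : ∀ ⦃u v x y⦄, G.Adj u v → G.Adj x y → s(u, v) ≠ s(x, y) →
      segment ℝ (pos u) (pos v) ∩ segment ℝ (pos x) (pos y) ⊆ range pos) :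
    PlaneEmb G where
  pos := pos
  pos_inj := hinj
  arc {u v} _ := Path.segment (pos u) (pos v)
  arc_cont _ _ _ := Path.continuous _
  arc_inj _ _ h := Path.segment_injective_of_ne (hinj.ne h.ne)
  arc_zero _ _ _ := Path.source _
  arc_one _ _ _ := Path.target _
  arc_symm u v _ t := by
    rw [← Path.segment_symm, Path.symm_apply, comp_apply, unitInterval.symm_symm]
  arc_vertex u v h t := by
    rintro ⟨w, hw⟩
    have hseg := Path.segment_injective_of_ne (hinj.ne h.ne)
    rcases hvert h w (hw ▸ Path.range_segment (pos u) (pos v) ▸ mem_range_self t) with rfl | rfl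
    · exact .inl (hseg (hw.trans (Path.source _).symm))
    · exact .inr (hseg (hw.trans (Path.target _).symm))
  arc_disj u v x y h h' hne t₁ t₂ heq := by
    have hmem : Path.segment (pos u) (pos v) t₁ ∈
        segment ℝ (pos u) (pos v) ∩ segment ℝ (pos x) (pos y) := by
      rw [← Path.range_segment, ← Path.range_segment]
      exact ⟨mem_range_self t₁, heq ▸ mem_range_self t₂⟩
    obtain ⟨w, hw⟩ := hinter h h' hne hmem
    exact ⟨w, hw.symm⟩

def ofOrient (pos : V → ℝ × ℝ) (hinj : Injective pos)
    (hcol : ∀ ⦃u v⦄, G.Adj u v → ∀ w, w ≠ u → w ≠ v → orient (pos u) (pos v) (pos w) ≠ 0)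
    (hdisj : ∀ ⦃u v x y⦄, G.Adj u v → G.Adj x y → u ≠ x → u ≠ y → v ≠ x → v ≠ y →
      Disjoint (segment ℝ (pos u) (pos v)) (segment ℝ (pos x) (pos y))) :
    PlaneEmb G := by
  refine ofSegments pos hinj (fun u v h w hw => ?_) (fun u v x y h h' hne => ?_)
  · by_contra! hwuv
    exact hcol h w hwuv.1 hwuv.2 (orient_eq_zero_of_mem_segment hw)
  have hshared : ∀ ⦃u v y⦄, G.Adj u v → G.Adj u y → v ≠ y →
      segment ℝ (pos u) (pos v) ∩ segment ℝ (pos u) (pos y) ⊆ range pos :=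
    fun u v y h h' hvy p hp =>
      ⟨u, (eq_of_mem_segment_of_mem_segment (hcol h' v h.ne.symm hvy) hp.1 hp.2).symm⟩
  by_cases hux : u = x
  · subst hux
    exact hshared h h' (by rintro rfl; exact hne rfl)
  by_cases huy : u = y
  · subst huy
    rw [segment_symm ℝ (pos x)]
    exact hshared h h'.symm (by rintro rfl; exact hne Sym2.eq_swap)
  by_cases hvx : v = x
  · subst hvx
    rw [segment_symm ℝ (pos u)]
    exact hshared h.symm h' (by rintro rfl; exact hne Sym2.eq_swap)
  by_cases hvy : v = y
  · subst hvy
    rw [segment_symm ℝ (pos u), segment_symm ℝ (pos x)]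
    exact hshared h.symm h'.symm (by rintro rfl; exact hne rfl)
  simp [(hdisj h h' hux huy hvx hvy).inter_eq]

def map (E : PlaneEmb G) (f : ℝ × ℝ → ℝ × ℝ) (hf : Continuous f) (hinj : Injective f) :
    PlaneEmb G where
  pos := f ∘ E.pos
  pos_inj := hinj.comp E.pos_inj
  arc _ _ h := f ∘ E.arc h
  arc_cont _ _ h := hf.comp (E.arc_cont h)
  arc_inj _ _ h := hinj.comp (E.arc_inj h)
  arc_zero _ _ h := congrArg f (E.arc_zero h)
  arc_one _ _ h := congrArg f (E.arc_one h)
  arc_symm _ _ h t := congrArg f (E.arc_symm h t)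
  arc_vertex _ _ h t := fun ⟨w, hw⟩ => E.arc_vertex h t ⟨w, hinj hw⟩
  arc_disj _ _ _ _ h h' hne t₁ t₂ heq :=
    let ⟨w, hw⟩ := E.arc_disj h h' hne t₁ t₂ (hinj heq)
    ⟨w, congrArg f hw⟩

/-- The two drawings are put side by side, in the half-planes `x > 0` and `x < 0`. -/
noncomputable def sum (E : PlaneEmb G) (F : PlaneEmb H) : PlaneEmb (G ⊕g H) :=
  let E' := E.map (expFst 1) (continuous_expFst 1) (expFst_injective one_ne_zero)
  let F' := F.map (expFst (-1)) (continuous_expFst (-1)) (expFst_injective (by norm_num))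
  { pos := Sum.elim E'.pos F'.pos
    pos_inj := by
      rintro (u | u) (v | v) h
      · exact congrArg _ (E'.pos_inj h)
      · exact absurd h (expFst_one_ne_expFst_neg_one _ _)
      · exact absurd h.symm (expFst_one_ne_expFst_neg_one _ _)
      · exact congrArg _ (F'.pos_inj h)
    arc := fun
      | .inl _, .inl _, h => E'.arc h
      | .inr _, .inr _, h => F'.arc h
      | .inl _, .inr _, h => (not_adj_sum_inl_inr _ _ h).elim
      | .inr _, .inl _, h => (not_adj_sum_inl_inr _ _ h.symm).elim
    arc_cont := by
      rintro (u | u) (v | v) h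
      exacts [E'.arc_cont h, absurd h (by simp), absurd h (by simp), F'.arc_cont h]
    arc_inj := by
      rintro (u | u) (v | v) h
      exacts [E'.arc_inj h, absurd h (by simp), absurd h (by simp), F'.arc_inj h]
    arc_zero := by
      rintro (u | u) (v | v) h
      exacts [E'.arc_zero h, absurd h (by simp), absurd h (by simp), F'.arc_zero h]
    arc_one := by
      rintro (u | u) (v | v) h
      exacts [E'.arc_one h, absurd h (by simp), absurd h (by simp), F'.arc_one h]
    arc_symm := by
      rintro (u | u) (v | v) h
      exacts [E'.arc_symm h, absurd h (by simp), absurd h (by simp), F'.arc_symm h]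
    arc_vertex := by
      rintro (u | u) (v | v) h t ⟨w | w, hw⟩
      · exact E'.arc_vertex h t ⟨w, hw⟩
      · exact absurd hw (expFst_one_ne_expFst_neg_one _ _)
      iterate 4 exact absurd h (by simp)
      · exact absurd hw.symm (expFst_one_ne_expFst_neg_one _ _)
      · exact F'.arc_vertex h t ⟨w, hw⟩
    arc_disj := by
      rintro (u | u) (v | v) (x | x) (y | y) h h' hne t₁ t₂ heq
      all_goals first
        | exact (not_adj_sum_inl_inr _ _ h).elim
        | exact (not_adj_sum_inl_inr _ _ h.symm).elim
        | exact (not_adj_sum_inl_inr _ _ h').elim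
        | exact (not_adj_sum_inl_inr _ _ h'.symm).elim
        | skip
      · obtain ⟨w, hw⟩ :=
          E'.arc_disj h h' (fun he => hne (congrArg (Sym2.map Sum.inl) he)) t₁ t₂ heq
        exact ⟨.inl w, hw⟩
      · exact absurd heq (expFst_one_ne_expFst_neg_one _ _)
      · exact absurd heq.symm (expFst_one_ne_expFst_neg_one _ _)
      · obtain ⟨w, hw⟩ :=
          F'.arc_disj h h' (fun he => hne (congrArg (Sym2.map Sum.inr) he)) t₁ t₂ heq
        exact ⟨.inr w, hw⟩ }

end PlaneEmb

theorem Set.ncard_image_inl_union_image_inr {α β : Type*} {s : Set α} {t : Set β}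
    (hs : s.Finite) (ht : t.Finite) :
    (Sum.inl '' s ∪ Sum.inr '' t).ncard = s.ncard + t.ncard := by
  rw [ncard_union_eq disjoint_image_inl_image_inr (hs.image _) (ht.image _),
    ncard_image_of_injective _ Sum.inl_injective, ncard_image_of_injective _ Sum.inr_injective]

theorem PlanarPair.add {a b p q p' q' : ℕ} (h : PlanarPair a p b q) (h' : PlanarPair a p' b q') :
    PlanarPair a (p + p') b (q + q') := by
  obtain ⟨V, _, G, A, B, hAB, hcover, rfl, rfl, hbip, hdegA, hdegB, ⟨E⟩⟩ := h
  obtain ⟨W, _, H, A', B', hAB', hcover', rfl, rfl, hbip', hdegA', hdegB', ⟨F⟩⟩ := h'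
  refine ⟨V ⊕ W, inferInstance, G ⊕g H, Sum.inl '' A ∪ Sum.inr '' A',
    Sum.inl '' B ∪ Sum.inr '' B', ?_, ?_, ncard_image_inl_union_image_inr A.toFinite A'.toFinite,
    ncard_image_inl_union_image_inr B.toFinite B'.toFinite, ?_, ?_, ?_, ⟨E.sum F⟩⟩
  · exact .union_left
      (.union_right ((disjoint_image_iff Sum.inl_injective).2 hAB) disjoint_image_inl_image_inr)
      (.union_right disjoint_image_inl_image_inr.symm
        ((disjoint_image_iff Sum.inr_injective).2 hAB'))
  · rw [union_union_union_comm, ← image_union, ← image_union, hcover, hcover', image_univ,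
      image_univ, range_inl_union_range_inr]
  · rintro (u | u) (v | v) huv
    · simpa using hbip huv
    · exact (not_adj_sum_inl_inr _ _ huv).elim
    · exact (not_adj_sum_inl_inr _ _ huv.symm).elim
    · simpa using hbip' huv
  · rintro _ (⟨v, hv, rfl⟩ | ⟨v, hv, rfl⟩)
    · rw [neighborSet_sum_inl, ncard_image_of_injective _ Sum.inl_injective, hdegA v hv]
    · rw [neighborSet_sum_inr, ncard_image_of_injective _ Sum.inr_injective, hdegA' v hv]
  · rintro _ (⟨v, hv, rfl⟩ | ⟨v, hv, rfl⟩)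
    · rw [neighborSet_sum_inl, ncard_image_of_injective _ Sum.inl_injective, hdegB v hv]
    · rw [neighborSet_sum_inr, ncard_image_of_injective _ Sum.inr_injective, hdegB' v hv]

namespace SimpleGraph

variable {α β : Type}

def incidenceGraph (N : α → Finset β) : SimpleGraph (α ⊕ β) where
  Adj
    | .inl a, .inr b => b ∈ N a
    | .inr b, .inl a => b ∈ N a
    | _, _ => False
  symm := ⟨by rintro (a | b) (a' | b') h <;> exact h⟩
  loopless := ⟨by rintro (a | b) h <;> exact h⟩

variable {N : α → Finset β}

theorem incidenceGraph_adj {u v : α ⊕ β} :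
    (incidenceGraph N).Adj u v ↔
      ∃ a, ∃ b ∈ N a, (u = .inl a ∧ v = .inr b) ∨ (u = .inr b ∧ v = .inl a) := by
  rcases u with a | b <;> rcases v with a' | b' <;> simp [incidenceGraph]

theorem incidenceGraph_neighborSet_inl (a : α) :
    (incidenceGraph N).neighborSet (.inl a) = Sum.inr '' (N a : Set β) := by
  ext (a' | b) <;> simp [incidenceGraph]

theorem incidenceGraph_neighborSet_inr (b : β) :
    (incidenceGraph N).neighborSet (.inr b) = Sum.inl '' {a | b ∈ N a} := by
  ext (a | b') <;> simp [incidenceGraph]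

def incidenceGraph.planeEmbOfOrient (P : α ⊕ β → ℤ × ℤ) (hinj : Injective P)
    (hcol : ∀ i, ∀ j ∈ N i, ∀ w, w ≠ .inl i → w ≠ .inr j →
      orient (P (.inl i)) (P (.inr j)) (P w) ≠ 0)
    (hsep : ∀ i, ∀ j ∈ N i, ∀ i', ∀ j' ∈ N i', i ≠ i' → j ≠ j' →
      0 < orient (P (.inl i)) (P (.inr j)) (P (.inl i')) *
        orient (P (.inl i)) (P (.inr j)) (P (.inr j')) ∨
      0 < orient (P (.inl i')) (P (.inr j')) (P (.inl i)) *
        orient (P (.inl i')) (P (.inr j')) (P (.inr j))) :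
    PlaneEmb (incidenceGraph N) := by
  let pos v : ℝ × ℝ := Prod.map (Int.castRingHom ℝ) (Int.castRingHom ℝ) (P v)
  have orient_pos u v w : orient (pos u) (pos v) (pos w) = orient (P u) (P v) (P w) :=
    RingHom.map_orient _ _ _ _
  have hsep' : ∀ ⦃i j⦄, j ∈ N i → ∀ ⦃i' j'⦄, j' ∈ N i' → i ≠ i' → j ≠ j' →
      Disjoint (segment ℝ (pos (.inl i)) (pos (.inr j)))
        (segment ℝ (pos (.inl i')) (pos (.inr j'))) := by
    intro i j hj i' j' hj' hii hjj
    rcases hsep i j hj i' j' hj' hii hjj with hpos | hpos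
    · exact disjoint_segment_of_orient_mul_pos (by rw [orient_pos, orient_pos]; exact_mod_cast hpos)
    · exact (disjoint_segment_of_orient_mul_pos
        (by rw [orient_pos, orient_pos]; exact_mod_cast hpos)).symm
  refine .ofOrient pos ((Prod.map_injective.2 ⟨Int.cast_injective, Int.cast_injective⟩).comp hinj)
    (fun u v h w hwu hwv => ?_) (fun u v x y h h' hux huy hvx hvy => ?_)
  · obtain ⟨i, j, hj, ⟨rfl, rfl⟩ | ⟨rfl, rfl⟩⟩ := incidenceGraph_adj.1 h
    · rw [orient_pos]; exact_mod_cast hcol i j hj w hwu hwv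
    · rw [orient_swap, neg_ne_zero, orient_pos]; exact_mod_cast hcol i j hj w hwv hwu
  obtain ⟨i, j, hj, ⟨rfl, rfl⟩ | ⟨rfl, rfl⟩⟩ := incidenceGraph_adj.1 h <;>
    obtain ⟨i', j', hj', ⟨rfl, rfl⟩ | ⟨rfl, rfl⟩⟩ := incidenceGraph_adj.1 h'
  · exact hsep' hj hj' (by rintro rfl; exact hux rfl) (by rintro rfl; exact hvy rfl)
  · rw [segment_symm ℝ (pos (.inr j'))]
    exact hsep' hj hj' (by rintro rfl; exact huy rfl) (by rintro rfl; exact hvx rfl)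
  · rw [segment_symm ℝ (pos (.inr j))]
    exact hsep' hj hj' (by rintro rfl; exact hvx rfl) (by rintro rfl; exact huy rfl)
  · rw [segment_symm ℝ (pos (.inr j)), segment_symm ℝ (pos (.inr j'))]
    exact hsep' hj hj' (by rintro rfl; exact hvy rfl) (by rintro rfl; exact hux rfl)

open Finset in
theorem planarPair_incidenceGraph [Fintype α] [Fintype β] [DecidableEq β] {a b : ℕ}
    (hdegA : ∀ i, #(N i) = a) (hdegB : ∀ j, #{i | j ∈ N i} = b)
    (E : PlaneEmb (incidenceGraph N)) :
    PlanarPair a (Fintype.card α) b (Fintype.card β) := by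
  refine ⟨α ⊕ β, inferInstance, incidenceGraph N, range .inl, range .inr,
    isCompl_range_inl_range_inr.disjoint, range_inl_union_range_inr, ?_, ?_, ?_, ?_, ?_, ⟨E⟩⟩
  · rw [← image_univ, ncard_image_of_injective _ Sum.inl_injective, ncard_univ,
      Nat.card_eq_fintype_card]
  · rw [← image_univ, ncard_image_of_injective _ Sum.inr_injective, ncard_univ,
      Nat.card_eq_fintype_card]
  · intro u v h
    obtain ⟨i, j, -, ⟨rfl, rfl⟩ | ⟨rfl, rfl⟩⟩ := incidenceGraph_adj.1 h <;> simp
  · rintro _ ⟨i, rfl⟩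
    rw [incidenceGraph_neighborSet_inl, ncard_image_of_injective _ Sum.inr_injective,
      ncard_coe_finset, hdegA]
  · rintro _ ⟨j, rfl⟩
    rw [incidenceGraph_neighborSet_inr, ncard_image_of_injective _ Sum.inl_injective,
      ← coe_filter_univ, ncard_coe_finset, hdegB]

end SimpleGraph

/-- The 20 faces of the icosahedron, on its 12 vertices. -/
def icosahedronFaces : Fin 20 → Finset (Fin 12) :=
  ![{0, 1, 2}, {0, 1, 5}, {0, 2, 3}, {1, 2, 7}, {0, 3, 4}, {2, 3, 8}, {0, 4, 5}, {1, 5, 6},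
    {3, 4, 9}, {4, 5, 10}, {5, 6, 10}, {1, 6, 7}, {2, 7, 8}, {3, 8, 9}, {4, 9, 10}, {6, 10, 11},
    {6, 7, 11}, {7, 8, 11}, {8, 9, 11}, {9, 10, 11}]

def icosahedronDrawing : Fin 20 ⊕ Fin 12 → ℤ × ℤ :=
  Sum.elim
    ![(2000, -1), (856, 912), (1215, 1141), (1252, 709), (1094, 1318), (1235, 954), (1040, 1279),
      (1078, 851), (1136, 1113), (1079, 1076), (1090, 973), (1145, 780), (1249, 849), (1171, 1030),
      (1116, 1071), (1131, 946), (1158, 882), (1186, 904), (1168, 973), (1138, 999)]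
    ![(1001, 1730), (1106, 614), (1356, 775), (1166, 1112), (1095, 1172), (1037, 1030), (1118, 889),
      (1198, 824), (1204, 939), (1148, 1036), (1113, 1011), (1156, 941)]

/-- The faces of a triangulation of the sphere with 18 vertices, except the two faces `{0, 1, 2}`
and `{9, 10, 13}`, which contain its six vertices of degree 6. -/
def faces18 : Fin 30 → Finset (Fin 18) :=
  ![{0, 2, 3}, {0, 1, 6}, {1, 2, 12}, {0, 3, 4}, {2, 3, 17}, {0, 4, 5}, {3, 4, 14}, {0, 5, 6},
    {1, 6, 7}, {4, 5, 9}, {5, 6, 8}, {6, 7, 8}, {1, 7, 11}, {7, 8, 10}, {5, 8, 9}, {8, 9, 10},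
    {7, 10, 11}, {1, 11, 12}, {2, 12, 16}, {4, 9, 14}, {10, 13, 15}, {9, 13, 14}, {10, 11, 15},
    {11, 12, 15}, {13, 14, 17}, {12, 15, 16}, {2, 16, 17}, {3, 14, 17}, {13, 16, 17}, {13, 15, 16}]

def drawing18 : Fin 30 ⊕ Fin 18 → ℤ × ℤ :=
  Sum.elim
    ![(2000, -1), (679, 896), (681, 442), (1152, 1076), (1151, 544), (1007, 1257), (1129, 834),
      (919, 1238), (771, 805), (999, 1010), (890, 998), (844, 890), (773, 707), (866, 825),
      (942, 968), (920, 857), (840, 751), (771, 626), (917, 527), (1040, 902), (921, 729),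
      (1004, 801), (867, 710), (845, 643), (1037, 710), (894, 613), (1004, 546), (1131, 699),
      (999, 646), (939, 663)]
    ![(999, 1731), (666, 627), (1000, 400), (1271, 674), (1064, 1021), (951, 1096), (827, 976),
      (819, 794), (893, 909), (978, 907), (883, 774), (817, 689), (825, 573), (981, 712),
      (1068, 788), (891, 673), (951, 598), (1064, 632)]

theorem planarPair_3_20_5_12 : PlanarPair 3 20 5 12 :=
  planarPair_incidenceGraph (N := icosahedronFaces) (by decide) (by decide)
    (incidenceGraph.planeEmbOfOrient icosahedronDrawing (by decide) (by decide) (by decide))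

theorem planarPair_3_30_5_18 : PlanarPair 3 30 5 18 :=
  planarPair_incidenceGraph (N := faces18) (by decide) (by decide)
    (incidenceGraph.planeEmbOfOrient drawing18 (by decide) (by decide) (by decide))

theorem planar_three_five_even (r : ℕ) (hr : 4 ≤ r) (hre : Even r) :
    PlanarPair 3 (5 * r) 5 (3 * r) := by
  induction r using Nat.strong_induction_on with
  | _ r ih =>
    obtain ⟨k, rfl⟩ := hre
    rcases (by omega : k = 2 ∨ k = 3 ∨ 4 ≤ k) with rfl | rfl | hk
    · exact planarPair_3_20_5_12
    · exact planarPair_3_30_5_18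
    · have h := planarPair_3_20_5_12.add (ih (k + k - 4) (by omega) (by omega) ⟨k - 2, by omega⟩)
      convert h using 2 <;> omega
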